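/- For each k ∈ ℕ₀, the generalized function x ↦ x^k is not a zero divisor in G(ℝ): for every u ∈ G(ℝ), if x^k·u = 0 in G(ℝ) (i.e. the net (x^k u_ε(x))_ε is negligible), then u = 0 in G(ℝ). -/

import Mathlib

open Set Filter Topology MeasureTheory

noncomputable section

variable {E F : Type*} [NormedAddCommGroup E] [NormedSpace ℝ E]
  [NormedAddCommGroup F] [NormedSpace ℝ F]

/-- A net of smooth functions, indexed by `ε ∈ (0,1]`, is *moderate* on the open set `Ω`:
all iterated derivatives are `O(ε^{-N})` on compact subsets, for some `N`. -/
def IsModerate (Ω : Set E) (u : ℝ → E → F) : Prop :=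
  (∀ ε ∈ Set.Ioc (0:ℝ) 1, ContDiffOn ℝ (⊤:ℕ∞) (u ε) Ω) ∧
  ∀ K : Set E, IsCompact K → K ⊆ Ω → ∀ n : ℕ, ∃ N : ℕ, ∃ C : ℝ, ∃ ε₀ : ℝ, 0 < ε₀ ∧
    ∀ ε : ℝ, 0 < ε → ε < ε₀ → ∀ x ∈ K,
      ‖iteratedFDerivWithin ℝ n (u ε) Ω x‖ ≤ C * ε ^ (-(N:ℤ))

/-- A net of smooth functions is *negligible* on `Ω`: all iterated derivatives are `O(ε^m)`
on compact subsets, for every `m`. -/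
def IsNegligible (Ω : Set E) (u : ℝ → E → F) : Prop :=
  (∀ ε ∈ Set.Ioc (0:ℝ) 1, ContDiffOn ℝ (⊤:ℕ∞) (u ε) Ω) ∧
  ∀ K : Set E, IsCompact K → K ⊆ Ω → ∀ n : ℕ, ∀ m : ℕ, ∃ C : ℝ, ∃ ε₀ : ℝ, 0 < ε₀ ∧
    ∀ ε : ℝ, 0 < ε → ε < ε₀ → ∀ x ∈ K,
      ‖iteratedFDerivWithin ℝ n (u ε) Ω x‖ ≤ C * ε ^ m

/-- A net of numbers is *moderate*: `O(ε^{-N})` for some `N`. -/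
def NumModerate (c : ℝ → F) : Prop :=
  ∃ N : ℕ, ∃ C : ℝ, ∃ ε₀ : ℝ, 0 < ε₀ ∧ ∀ ε : ℝ, 0 < ε → ε < ε₀ → ‖c ε‖ ≤ C * ε ^ (-(N:ℤ))

/-- A net of numbers is *negligible*: `O(ε^m)` for every `m`. -/
def NumNegligible (c : ℝ → F) : Prop :=
  ∀ m : ℕ, ∃ C : ℝ, ∃ ε₀ : ℝ, 0 < ε₀ ∧ ∀ ε : ℝ, 0 < ε → ε < ε₀ → ‖c ε‖ ≤ C * ε ^ m

/-- A net of points is a representative of a *compactly supported generalized point* of `Ω`. -/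
def CompactlySupportedPoint (Ω : Set E) (a : ℝ → E) : Prop :=
  ∃ K : Set E, IsCompact K ∧ K ⊆ Ω ∧ ∃ ε₀ : ℝ, 0 < ε₀ ∧ ∀ ε : ℝ, 0 < ε → ε < ε₀ → a ε ∈ K

/-- The partial order on generalized reals, on representatives: `a ≤ b` iff `b - a` has a
representative with all terms nonnegative, i.e. `a ε + n ε ≤ b ε` for some negligible `n`. -/
def TildeLe (a b : ℝ → ℝ) : Prop :=
  ∃ n : ℝ → ℝ, NumNegligible n ∧ ∀ ε ∈ Set.Ioc (0:ℝ) 1, a ε + n ε ≤ b ε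

/-- Strict order `a << b`: `b - a` is strictly positive, i.e. `b ε - a ε > ε^m` for some `m`
and all small `ε`. -/
def TildeLt (a b : ℝ → ℝ) : Prop :=
  ∃ m : ℕ, ∃ ε₀ : ℝ, 0 < ε₀ ∧ ∀ ε : ℝ, 0 < ε → ε < ε₀ → a ε + ε ^ m < b ε

/-!
Since `x^(k+1) u = x^k (x u)` and `x u` is again moderate, it suffices to treat `k = 1`. Let `x v_ε`
be negligible with `v` moderate. Dividing by `x` bounds `v_ε(y)` by `B/δ` where `|y| ≥ δ`; every
other point lies within `δ` of such a `y`, and the mean value theorem with a moderate bound `A` on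
`v_ε'` gives `|v_ε| ≤ B/δ + A δ` everywhere. With `A = O(ε^(-N))`, `B = O(ε^(2m+N))` and
`δ = ε^(m+N)` both terms are `O(ε^m)`. Higher derivatives follow by induction on the order, since
`(x v)^(n+1) = x v^(n+1) + (n+1) v^(n)`.
-/

open Metric

lemma eventually_nhdsGT_zero_iff_exists {P : ℝ → Prop} :
    (∀ᶠ ε in 𝓝[>] 0, P ε) ↔ ∃ ε₀ : ℝ, 0 < ε₀ ∧ ∀ ε : ℝ, 0 < ε → ε < ε₀ → P ε := by
  simp [(nhdsGT_basis (0:ℝ)).eventually_iff, and_imp]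

lemma mul_zpow_neg_le_abs_mul_zpow_neg {ε C : ℝ} (hε : 0 < ε) (hε1 : ε ≤ 1) {N M : ℕ}
    (hNM : N ≤ M) : C * ε ^ (-(N:ℤ)) ≤ |C| * ε ^ (-(M:ℤ)) :=
  mul_le_mul (le_abs_self C) (zpow_le_zpow_right_of_le_one₀ hε hε1 (by omega))
    (zpow_nonneg hε.le _) (abs_nonneg C)

section ZerothOrder

variable {X V : Type*} [TopologicalSpace X] [NormedAddCommGroup V]

/- The estimates in `IsNegligible` and `IsModerate` for one fixed derivative order, with
"for all small `ε`" written as `∀ᶠ ε in 𝓝[>] 0`. -/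
def IsNegligible₀ (u : ℝ → X → V) : Prop :=
  ∀ K : Set X, IsCompact K → ∀ m : ℕ, ∃ C : ℝ, ∀ᶠ ε in 𝓝[>] 0, ∀ x ∈ K, ‖u ε x‖ ≤ C * ε ^ m

def IsModerate₀ (u : ℝ → X → V) : Prop :=
  ∀ K : Set X, IsCompact K → ∃ N : ℕ, ∃ C : ℝ, ∀ᶠ ε in 𝓝[>] 0, ∀ x ∈ K,
    ‖u ε x‖ ≤ C * ε ^ (-(N:ℤ))

namespace IsNegligible₀

variable {u v : ℝ → X → V}

lemma congr (hu : IsNegligible₀ u) (huv : u =ᶠ[𝓝[>] 0] v) : IsNegligible₀ v := by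
  intro K hK m
  obtain ⟨C, hC⟩ := hu K hK m
  refine ⟨C, ?_⟩
  filter_upwards [hC, huv] with ε hε huvε
  rwa [← huvε]

lemma sub (hu : IsNegligible₀ u) (hv : IsNegligible₀ v) :
    IsNegligible₀ fun ε x => u ε x - v ε x := by
  intro K hK m
  obtain ⟨C₁, hC₁⟩ := hu K hK m
  obtain ⟨C₂, hC₂⟩ := hv K hK m
  refine ⟨C₁ + C₂, ?_⟩
  filter_upwards [hC₁, hC₂] with ε h₁ h₂ x hx
  calc ‖u ε x - v ε x‖ ≤ ‖u ε x‖ + ‖v ε x‖ := norm_sub_le _ _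
    _ ≤ (C₁ + C₂) * ε ^ m := by linarith [h₁ x hx, h₂ x hx]

lemma smul [NormedSpace ℝ V] {f : X → ℝ} (hf : Continuous f) (hu : IsNegligible₀ u) :
    IsNegligible₀ fun ε x => f x • u ε x := by
  intro K hK m
  obtain ⟨M, hM⟩ := hK.exists_bound_of_continuousOn hf.continuousOn
  obtain ⟨C, hC⟩ := hu K hK m
  refine ⟨M * C, ?_⟩
  filter_upwards [hC] with ε hε x hx
  rw [norm_smul, mul_assoc]
  exact mul_le_mul (hM x hx) (hε x hx) (norm_nonneg _) ((norm_nonneg _).trans (hM x hx))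

end IsNegligible₀

namespace IsModerate₀

variable {u v : ℝ → X → V}

lemma congr (hu : IsModerate₀ u) (huv : u =ᶠ[𝓝[>] 0] v) : IsModerate₀ v := by
  intro K hK
  obtain ⟨N, C, hC⟩ := hu K hK
  refine ⟨N, C, ?_⟩
  filter_upwards [hC, huv] with ε hε huvε
  rwa [← huvε]

lemma smul [NormedSpace ℝ V] {f : X → ℝ} (hf : Continuous f) (hu : IsModerate₀ u) :
    IsModerate₀ fun ε x => f x • u ε x := by
  intro K hK
  obtain ⟨M, hM⟩ := hK.exists_bound_of_continuousOn hf.continuousOn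
  obtain ⟨N, C, hC⟩ := hu K hK
  refine ⟨N, M * C, ?_⟩
  filter_upwards [hC] with ε hε x hx
  rw [norm_smul, mul_assoc]
  exact mul_le_mul (hM x hx) (hε x hx) (norm_nonneg _) ((norm_nonneg _).trans (hM x hx))

lemma add (hu : IsModerate₀ u) (hv : IsModerate₀ v) :
    IsModerate₀ fun ε x => u ε x + v ε x := by
  intro K hK
  obtain ⟨N₁, C₁, hC₁⟩ := hu K hK
  obtain ⟨N₂, C₂, hC₂⟩ := hv K hK
  refine ⟨max N₁ N₂, |C₁| + |C₂|, ?_⟩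
  filter_upwards [hC₁, hC₂, Ioc_mem_nhdsGT one_pos] with ε h₁ h₂ ⟨hε, hε1⟩ x hx
  calc ‖u ε x + v ε x‖ ≤ ‖u ε x‖ + ‖v ε x‖ := norm_add_le _ _
    _ ≤ (|C₁| + |C₂|) * ε ^ (-(max N₁ N₂ : ℕ):ℤ) := by
      linarith [h₁ x hx, h₂ x hx,
        mul_zpow_neg_le_abs_mul_zpow_neg (C := C₁) hε hε1 (le_max_left N₁ N₂),
        mul_zpow_neg_le_abs_mul_zpow_neg (C := C₂) hε hε1 (le_max_right N₁ N₂)]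

end IsModerate₀

end ZerothOrder

lemma isNegligible_univ_iff {u : ℝ → ℝ → F} :
    IsNegligible univ u ↔ (∀ ε ∈ Ioc (0:ℝ) 1, ContDiff ℝ (⊤:ℕ∞) (u ε)) ∧
      ∀ n : ℕ, IsNegligible₀ fun ε => iteratedDeriv n (u ε) := by
  simp only [IsNegligible, IsNegligible₀, contDiffOn_univ, subset_univ, forall_const,
    iteratedFDerivWithin_univ, norm_iteratedFDeriv_eq_norm_iteratedDeriv,
    eventually_nhdsGT_zero_iff_exists]
  exact and_congr_right fun _ => ⟨fun h n K hK => h K hK n, fun h K hK n => h n K hK⟩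

lemma isModerate_univ_iff {u : ℝ → ℝ → F} :
    IsModerate univ u ↔ (∀ ε ∈ Ioc (0:ℝ) 1, ContDiff ℝ (⊤:ℕ∞) (u ε)) ∧
      ∀ n : ℕ, IsModerate₀ fun ε => iteratedDeriv n (u ε) := by
  simp only [IsModerate, IsModerate₀, contDiffOn_univ, subset_univ, forall_const,
    iteratedFDerivWithin_univ, norm_iteratedFDeriv_eq_norm_iteratedDeriv,
    eventually_nhdsGT_zero_iff_exists]
  exact and_congr_right fun _ => ⟨fun h n K hK => h K hK n, fun h K hK n => h n K hK⟩

lemma ContDiff.hasDerivAt_iteratedDeriv {g : ℝ → F} (hg : ContDiff ℝ (⊤:ℕ∞) g) (n : ℕ)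
    (x : ℝ) : HasDerivAt (iteratedDeriv n g) (iteratedDeriv (n + 1) g x) x := by
  rw [iteratedDeriv_succ]
  exact (hg.differentiable_iteratedDeriv n (by norm_cast; exact ENat.natCast_lt_top n)
    x).hasDerivAt

lemma iteratedDeriv_succ_smul_id {g : ℝ → F} (hg : ContDiff ℝ (⊤:ℕ∞) g) (n : ℕ) :
    iteratedDeriv (n + 1) (fun x => x • g x) =
      fun x => x • iteratedDeriv (n + 1) g x + ((n : ℝ) + 1) • iteratedDeriv n g x := by
  induction n with
  | zero =>
    ext x
    have hg' : HasDerivAt g (deriv g x) x := (hg.differentiable (by simp) x).hasDerivAt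
    simp only [Nat.cast_zero, zero_add, one_smul, iteratedDeriv_one, iteratedDeriv_zero,
      ((hasDerivAt_id' x).fun_smul hg').deriv]
  | succ n ih =>
    ext x
    rw [iteratedDeriv_succ, ih]
    refine (((hasDerivAt_id' x).fun_smul (hg.hasDerivAt_iteratedDeriv (n + 1) x)).add
      ((hg.hasDerivAt_iteratedDeriv n x).const_smul ((n : ℝ) + 1))).deriv.trans ?_
    simp only [one_smul, Nat.cast_add, Nat.cast_one]
    module

lemma exists_far_from_zero_near {R δ x : ℝ} (hδ : 0 < δ) (hx : |x| ≤ R) :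
    ∃ y : ℝ, |y| ≤ R + δ ∧ δ ≤ |y| ∧ |x - y| ≤ δ := by
  rcases le_total 0 x with hx0 | hx0
  · refine ⟨x + δ, ?_, le_abs.2 (Or.inl (by linarith)), by simp [abs_of_pos hδ]⟩
    rw [abs_le] at hx ⊢
    constructor <;> linarith
  · refine ⟨x - δ, ?_, le_abs.2 (Or.inr (by linarith)), by simp [abs_of_pos hδ]⟩
    rw [abs_le] at hx ⊢
    constructor <;> linarith

lemma norm_le_of_norm_smul_id_le {g : ℝ → F} (hg : Differentiable ℝ g) {R δ A B : ℝ}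
    (hδ : 0 < δ) (hA : ∀ y ∈ closedBall (0:ℝ) (R + δ), ‖deriv g y‖ ≤ A)
    (hB : ∀ y ∈ closedBall (0:ℝ) (R + δ), ‖y • g y‖ ≤ B) {x : ℝ} (hx : x ∈ closedBall 0 R) :
    ‖g x‖ ≤ B / δ + A * δ := by
  rw [mem_closedBall_zero_iff, Real.norm_eq_abs] at hx
  obtain ⟨y, hyR, hyδ, hxy⟩ := exists_far_from_zero_near hδ hx
  have hy : y ∈ closedBall (0:ℝ) (R + δ) := by rwa [mem_closedBall_zero_iff, Real.norm_eq_abs]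
  have hx' : x ∈ closedBall (0:ℝ) (R + δ) := by
    rw [mem_closedBall_zero_iff, Real.norm_eq_abs]; linarith
  have hgy : ‖g y‖ ≤ B / δ := by
    rw [le_div_iff₀ hδ]
    calc ‖g y‖ * δ ≤ ‖g y‖ * |y| := by gcongr
      _ = ‖y • g y‖ := by rw [norm_smul, Real.norm_eq_abs, mul_comm]
      _ ≤ B := hB y hy
  have hgxy : ‖g x - g y‖ ≤ A * δ := by
    have hA0 : 0 ≤ A := (norm_nonneg _).trans (hA x hx')
    calc ‖g x - g y‖ ≤ A * ‖x - y‖ :=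
          (convex_closedBall 0 (R + δ)).norm_image_sub_le_of_norm_deriv_le
            (fun z _ => hg z) hA hy hx'
      _ ≤ A * δ := by rw [Real.norm_eq_abs]; gcongr
  calc ‖g x‖ ≤ ‖g y‖ + ‖g x - g y‖ := norm_le_insert' _ _
    _ ≤ B / δ + A * δ := add_le_add hgy hgxy

lemma IsNegligible₀.of_smul_id {g : ℝ → ℝ → F}
    (hg : ∀ᶠ ε in 𝓝[>] 0, Differentiable ℝ (g ε)) (hg' : IsModerate₀ fun ε => deriv (g ε))
    (h : IsNegligible₀ fun ε x => x • g ε x) : IsNegligible₀ g := by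
  intro K hK m
  obtain ⟨R, hKR⟩ := hK.isBounded.subset_closedBall 0
  obtain ⟨N, A, hA⟩ := hg' _ (isCompact_closedBall (0:ℝ) (R + 1))
  obtain ⟨B, hB⟩ := h _ (isCompact_closedBall (0:ℝ) (R + 1)) (2 * m + N)
  refine ⟨B + A, ?_⟩
  filter_upwards [hg, hA, hB, Ioc_mem_nhdsGT one_pos] with ε hgε hAε hBε ⟨hε, hε1⟩ x hx
  have hδ : ε ^ (m + N) ≤ 1 := pow_le_one₀ hε.le hε1
  have hball : closedBall (0:ℝ) (R + ε ^ (m + N)) ⊆ closedBall 0 (R + 1) :=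
    closedBall_subset_closedBall (by linarith)
  calc ‖g ε x‖ ≤ B * ε ^ (2 * m + N) / ε ^ (m + N) + A * ε ^ (-(N:ℤ)) * ε ^ (m + N) :=
        norm_le_of_norm_smul_id_le hgε (pow_pos hε _) (fun y hy => hAε y (hball hy))
          (fun y hy => hBε y (hball hy)) (hKR hx)
    _ = (B + A) * ε ^ m := by
      rw [zpow_neg, zpow_natCast]
      field_simp
      ring

lemma IsModerate.smul_id {v : ℝ → ℝ → F} (hv : IsModerate univ v) :
    IsModerate univ fun ε x => x • v ε x := by
  rw [isModerate_univ_iff] at hv ⊢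
  obtain ⟨hsmooth, hmod⟩ := hv
  refine ⟨fun ε hε => contDiff_id.smul (hsmooth ε hε), fun n => ?_⟩
  cases n with
  | zero => simpa using (hmod 0).smul continuous_id
  | succ n =>
    refine ((hmod (n + 1)).smul continuous_id |>.add
      ((hmod n).smul (f := fun _ => (n : ℝ) + 1) continuous_const)).congr ?_
    filter_upwards [Ioc_mem_nhdsGT one_pos] with ε hε
    exact (iteratedDeriv_succ_smul_id (hsmooth ε hε) n).symm

lemma IsNegligible.of_smul_id {v : ℝ → ℝ → F} (hv : IsModerate univ v)
    (h : IsNegligible univ fun ε x => x • v ε x) : IsNegligible univ v := by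
  rw [isModerate_univ_iff] at hv
  rw [isNegligible_univ_iff] at h ⊢
  obtain ⟨hsmooth, hmod⟩ := hv
  have hsmooth' : ∀ᶠ ε in 𝓝[>] 0, ContDiff ℝ (⊤:ℕ∞) (v ε) :=
    eventually_of_mem (Ioc_mem_nhdsGT one_pos) hsmooth
  have hdiff (n : ℕ) : ∀ᶠ ε in 𝓝[>] 0, Differentiable ℝ (iteratedDeriv n (v ε)) := by
    filter_upwards [hsmooth'] with ε hε x
    exact (hε.hasDerivAt_iteratedDeriv n x).differentiableAt
  refine ⟨hsmooth, fun n => ?_⟩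
  induction n with
  | zero => exact .of_smul_id (hdiff 0) (by simpa using hmod 1) (by simpa using h.2 0)
  | succ n ih =>
    refine .of_smul_id (hdiff (n + 1)) (by simpa [iteratedDeriv_succ] using hmod (n + 2)) ?_
    refine ((h.2 (n + 1)).sub (ih.smul (f := fun _ => (n : ℝ) + 1) continuous_const)).congr ?_
    filter_upwards [hsmooth'] with ε hε
    ext x
    rw [iteratedDeriv_succ_smul_id hε]
    module

lemma IsNegligible.of_pow_smul {u : ℝ → ℝ → F} (k : ℕ) (hu : IsModerate univ u)
    (h : IsNegligible univ fun ε x => x ^ k • u ε x) : IsNegligible univ u := by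
  induction k generalizing u with
  | zero => simpa using h
  | succ k ih =>
    exact IsNegligible.of_smul_id hu
      (ih (IsModerate.smul_id hu) (by simpa only [pow_succ, mul_smul] using h))

/-- for every `k ∈ ℕ₀`, `x^k` is not a zero divisor in `G(ℝ)`. -/
theorem statement_12
    (k : ℕ) (u : ℝ → ℝ → ℂ)
    (hu : IsModerate (Set.univ : Set ℝ) u)
    (h : IsNegligible (Set.univ : Set ℝ) (fun ε x => (x : ℂ) ^ k * u ε x)) :
    IsNegligible (Set.univ : Set ℝ) u := by
  refine IsNegligible.of_pow_smul k hu ?_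
  simpa only [Complex.real_smul, Complex.ofReal_pow] using h
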